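/- Let k be a field, let r be a positive integer, and let α : Fin r → ℝ satisfy α i > 0 for every i. There exists a unique valuation v : MvPowerSeries (Fin r) k → ℝ≥0 (a Valuation in Mathlib's sense, with values in the nonnegative reals with multiplication) such that v(0) = 0 and v(f) = exp(−w_α(f)) for every nonzero f in MvPowerSeries (Fin r) k. -/

import Mathlib

/-!
Order the exponents `d : Fin r →₀ ℕ` by their weight `∑ i, α i * d i`, breaking ties
lexicographically. This is a total order compatible with addition, and since only finitely many
exponents have weight below any bound, every nonzero series has a least exponent in its support.
At the sum of the least exponents of `f` and `g` the coefficient of `f * g` is a single product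
of nonzero coefficients, so `w_α (f * g) = w_α f + w_α g`; and `w_α (f + g) ≥ min (w_α f) (w_α g)`
because the support of `f + g` lies in the union of the supports. Hence `exp (-w_α)` is a
valuation, unique since a valuation is determined by its values.
-/

open scoped NNReal

/-- The α-weighted order `w_α(f) = inf { ∑ i, α i * β i : coeff β f ≠ 0 }` of a
multivariate formal power series. -/
noncomputable def wOrd {k : Type*} [Field k] {r : ℕ} (α : Fin r → ℝ)
    (f : MvPowerSeries (Fin r) k) : ℝ :=
  sInf {x : ℝ | ∃ β : Fin r →₀ ℕ, MvPowerSeries.coeff β f ≠ 0 ∧ x = ∑ i, α i * (β i : ℝ)}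

open Filter Finsupp MvPowerSeries

namespace MvPowerSeries

variable {σ R : Type*} [Semiring R]

theorem exists_add_eq_of_coeff_mul_ne_zero {f g : MvPowerSeries σ R} {d : σ →₀ ℕ}
    (h : coeff d (f * g) ≠ 0) : ∃ u v, u + v = d ∧ coeff u f ≠ 0 ∧ coeff v g ≠ 0 := by
  classical
  rw [coeff_mul] at h
  obtain ⟨⟨u, v⟩, huv, hne⟩ := Finset.exists_ne_zero_of_sum_ne_zero h
  exact ⟨u, v, Finset.HasAntidiagonal.mem_antidiagonal.1 huv, left_ne_zero_of_mul hne,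
    right_ne_zero_of_mul hne⟩

theorem coeff_add_mul_of_forall_le {Γ : Type*} [AddCommMonoid Γ] [LinearOrder Γ]
    [IsOrderedCancelAddMonoid Γ] {key : (σ →₀ ℕ) →+ Γ} (hkey : Function.Injective key)
    {f g : MvPowerSeries σ R} {p q : σ →₀ ℕ}
    (hp : ∀ d, coeff d f ≠ 0 → key p ≤ key d) (hq : ∀ d, coeff d g ≠ 0 → key q ≤ key d) :
    coeff (p + q) (f * g) = coeff p f * coeff q g := by
  classical
  rw [coeff_mul, Finset.sum_eq_single_of_mem (p, q) (by simp)]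
  rintro ⟨u, v⟩ huv hne
  have hsum : key u + key v = key p + key q := by
    rw [← map_add, ← map_add, Finset.HasAntidiagonal.mem_antidiagonal.1 huv]
  rcases trichotomy_of_add_eq_add hsum with ⟨hu, hv⟩ | hu | hv
  · exact absurd (Prod.ext (hkey hu) (hkey hv)) hne
  · rw [not_ne_iff.1 (mt (hp u) hu.not_ge), zero_mul]
  · rw [not_ne_iff.1 (mt (hq v) hv.not_ge), mul_zero]

end MvPowerSeries

namespace Finsupp

variable {σ : Type*} {α : σ → ℝ}

theorem weight_nonneg (hα : ∀ i, 0 ≤ α i) (d : σ →₀ ℕ) : 0 ≤ weight α d := by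
  rw [weight_apply]
  exact Finset.sum_nonneg fun i _ => nsmul_nonneg (hα i) _

theorem bddBelow_image_weight (hα : ∀ i, 0 ≤ α i) (s : Set (σ →₀ ℕ)) :
    BddBelow (weight α '' s) :=
  ⟨0, by rintro _ ⟨d, -, rfl⟩; exact weight_nonneg hα d⟩

theorem finite_setOf_weight_le [Finite σ] (hα : ∀ i, 0 < α i) (C : ℝ) :
    {d : σ →₀ ℕ | weight α d ≤ C}.Finite := by
  classical
  cases nonempty_fintype σ
  refine (Set.finite_Iic (equivFunOnFinite.symm fun i => ⌈C / α i⌉₊)).subset fun d hd i => ?_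
  have hdi : d i * α i ≤ C := by
    rw [Set.mem_ofPred_eq, weight_eq_sum] at hd
    refine le_trans ?_ hd
    rw [← nsmul_eq_mul]
    exact Finset.single_le_sum (fun j _ => nsmul_nonneg (hα j).le _) (Finset.mem_univ i)
  exact Nat.cast_le.1 (((le_div_iff₀ (hα i)).2 hdi).trans (Nat.le_ceil _))

noncomputable def weightLex [LinearOrder σ] (α : σ → ℝ) :
    (σ →₀ ℕ) →+ Lex (ℝ × Lex (σ →₀ ℕ)) where
  toFun d := toLex (weight α d, toLex d)
  map_zero' := by simp
  map_add' d e := by simp; rfl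

variable [LinearOrder σ]

theorem weightLex_injective (α : σ → ℝ) : Function.Injective (weightLex α) :=
  fun _ _ h => toLex.injective (congrArg (fun x => (ofLex x).2) h)

theorem weight_le_of_weightLex_le {d e : σ →₀ ℕ} (h : weightLex α d ≤ weightLex α e) :
    weight α d ≤ weight α e :=
  Prod.Lex.monotone_fst _ _ h

theorem tendsto_weightLex_cofinite_atTop [Finite σ] (hα : ∀ i, 0 < α i) :
    Tendsto (weightLex α) cofinite atTop := by
  refine tendsto_atTop.2 fun K => eventually_cofinite.2 ?_
  exact (finite_setOf_weight_le hα (ofLex K).1).subset fun d hd =>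
    Prod.Lex.monotone_fst _ _ (not_le.1 hd).le

end Finsupp

section wOrd

variable {k : Type*} [Field k] {r : ℕ} {α : Fin r → ℝ} {f g : MvPowerSeries (Fin r) k}

theorem wOrd_eq_sInf_weight (α : Fin r → ℝ) (f : MvPowerSeries (Fin r) k) :
    wOrd α f = sInf (weight α '' {d | coeff d f ≠ 0}) := by
  simp only [wOrd, weight_eq_sum, nsmul_eq_mul, mul_comm, Set.image, Set.mem_ofPred_eq, eq_comm]

theorem wOrd_le_weight (hα : ∀ i, 0 ≤ α i) {d : Fin r →₀ ℕ} (hd : coeff d f ≠ 0) :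
    wOrd α f ≤ weight α d := by
  rw [wOrd_eq_sInf_weight]
  exact csInf_le (bddBelow_image_weight hα _) ⟨d, hd, rfl⟩

theorem le_wOrd_iff (hα : ∀ i, 0 ≤ α i) (hf : f ≠ 0) {C : ℝ} :
    C ≤ wOrd α f ↔ ∀ d, coeff d f ≠ 0 → C ≤ weight α d := by
  obtain ⟨d, hd⟩ := (ne_zero_iff_exists_coeff_ne_zero f).1 hf
  rw [wOrd_eq_sInf_weight, le_csInf_iff (bddBelow_image_weight hα _) ⟨_, d, hd, rfl⟩,
    Set.forall_mem_image]
  rfl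

theorem wOrd_eq_weight_of_forall_le (hα : ∀ i, 0 ≤ α i) {p : Fin r →₀ ℕ} (hp : coeff p f ≠ 0)
    (hmin : ∀ d, coeff d f ≠ 0 → weight α p ≤ weight α d) : wOrd α f = weight α p :=
  le_antisymm (wOrd_le_weight hα hp)
    ((le_wOrd_iff hα fun hf => hp (by rw [hf, map_zero])).2 hmin)

theorem wOrd_one (hα : ∀ i, 0 ≤ α i) : wOrd α (1 : MvPowerSeries (Fin r) k) = 0 := by
  simpa using wOrd_eq_weight_of_forall_le (f := 1) hα (p := 0) (by simp) fun d _ => by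
    simpa using weight_nonneg hα d

theorem min_wOrd_le_wOrd_add (hα : ∀ i, 0 ≤ α i) (hfg : f + g ≠ 0) :
    min (wOrd α f) (wOrd α g) ≤ wOrd α (f + g) := by
  refine (le_wOrd_iff hα hfg).2 fun d hd => ?_
  have hsupp : coeff d f ≠ 0 ∨ coeff d g ≠ 0 := by
    contrapose! hd
    simp [hd]
  rcases hsupp with h | h
  · exact min_le_of_left_le (wOrd_le_weight hα h)
  · exact min_le_of_right_le (wOrd_le_weight hα h)

theorem wOrd_mul (hα : ∀ i, 0 < α i) (hf : f ≠ 0) (hg : g ≠ 0) :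
    wOrd α (f * g) = wOrd α f + wOrd α g := by
  obtain ⟨p, hp, hpmin⟩ := (tendsto_weightLex_cofinite_atTop hα).exists_within_forall_le
    ((ne_zero_iff_exists_coeff_ne_zero f).1 hf)
  obtain ⟨q, hq, hqmin⟩ := (tendsto_weightLex_cofinite_atTop hα).exists_within_forall_le
    ((ne_zero_iff_exists_coeff_ne_zero g).1 hg)
  have hα' : ∀ i, 0 ≤ α i := fun i => (hα i).le
  have hpq : coeff (p + q) (f * g) ≠ 0 := by
    rw [coeff_add_mul_of_forall_le (weightLex_injective α) hpmin hqmin]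
    exact mul_ne_zero hp hq
  rw [wOrd_eq_weight_of_forall_le hα' hp fun d hd => weight_le_of_weightLex_le (hpmin d hd),
    wOrd_eq_weight_of_forall_le hα' hq fun d hd => weight_le_of_weightLex_le (hqmin d hd),
    ← map_add]
  refine wOrd_eq_weight_of_forall_le hα' hpq fun d hd => ?_
  obtain ⟨u, v, rfl, hu, hv⟩ := exists_add_eq_of_coeff_mul_ne_zero hd
  rw [map_add, map_add]
  exact add_le_add (weight_le_of_weightLex_le (hpmin u hu))
    (weight_le_of_weightLex_le (hqmin v hv))

end wOrd

theorem antitone_toNNReal_exp_neg : Antitone fun x : ℝ => (Real.exp (-x)).toNNReal :=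
  fun _ _ h => Real.toNNReal_le_toNNReal (Real.exp_le_exp.2 (neg_le_neg h))

open Classical in
noncomputable def monomialValuation {k : Type*} [Field k] {r : ℕ} (α : Fin r → ℝ)
    (hα : ∀ i, 0 < α i) : Valuation (MvPowerSeries (Fin r) k) ℝ≥0 where
  toFun f := if f = 0 then 0 else (Real.exp (-wOrd α f)).toNNReal
  map_zero' := if_pos rfl
  map_one' := by rw [if_neg one_ne_zero, wOrd_one fun i => (hα i).le]; simp
  map_mul' f g := by
    by_cases hf : f = 0
    · simp [hf]
    by_cases hg : g = 0
    · simp [hg]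
    simp only [if_neg hf, if_neg hg, if_neg (mul_ne_zero hf hg), wOrd_mul hα hf hg, neg_add,
      Real.exp_add, Real.toNNReal_mul (Real.exp_nonneg _)]
  map_add_le_max' f g := by
    by_cases hfg : f + g = 0
    · simp [hfg]
    by_cases hf : f = 0
    · simp [hf]
    by_cases hg : g = 0
    · simp [hg]
    simp only [if_neg hfg, if_neg hf, if_neg hg, ← antitone_toNNReal_exp_neg.map_min]
    exact antitone_toNNReal_exp_neg (min_wOrd_le_wOrd_add (fun i => (hα i).le) hfg)

theorem monomialValuation_apply_of_ne_zero {k : Type*} [Field k] {r : ℕ} {α : Fin r → ℝ}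
    (hα : ∀ i, 0 < α i) {f : MvPowerSeries (Fin r) k} (hf : f ≠ 0) :
    monomialValuation α hα f = (Real.exp (-wOrd α f)).toNNReal :=
  if_neg hf

theorem exists_unique_monomial_valuation_general
    (k : Type*) [Field k] (r : ℕ) (α : Fin r → ℝ) (hα : ∀ i, 0 < α i) :
    ∃! v : Valuation (MvPowerSeries (Fin r) k) ℝ≥0,
      v 0 = 0 ∧
      ∀ f : MvPowerSeries (Fin r) k, f ≠ 0 →
        v f = Real.toNNReal (Real.exp (-(wOrd α f))) := by
  refine ⟨monomialValuation α hα,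
    ⟨map_zero _, fun f hf => monomialValuation_apply_of_ne_zero hα hf⟩, ?_⟩
  rintro v ⟨-, hv⟩
  refine Valuation.ext fun f => ?_
  obtain rfl | hf := eq_or_ne f 0
  · simp
  · rw [hv f hf, monomialValuation_apply_of_ne_zero hα hf]

/-- **The monomial valuation (Proposition 2.4.4(2), power-series model).**  Let `k` be a
field, `r ≥ 1`, and let `α : Fin r → ℝ` have positive entries.  There is a unique
valuation `v : MvPowerSeries (Fin r) k → ℝ≥0` with `v 0 = 0` and
`v f = exp (−w_α(f))` for every nonzero `f`. -/
theorem exists_unique_monomial_valuation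
    (k : Type*) [Field k] (r : ℕ) (hr : 0 < r) (α : Fin r → ℝ) (hα : ∀ i, 0 < α i) :
    ∃! v : Valuation (MvPowerSeries (Fin r) k) ℝ≥0,
      v 0 = 0 ∧
      ∀ f : MvPowerSeries (Fin r) k, f ≠ 0 →
        v f = Real.toNNReal (Real.exp (-(wOrd α f))) :=
  exists_unique_monomial_valuation_general k r α hα
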